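/- Let P_R ⊂ M (a compact manifold in [0,1]^d) be sets with |P_R| ∼ R^{2d/p} satisfying the tight decoupling inequality (1/R^d)∫_{[0,R]^d} |∑_{ξ∈P_R} a_ξ e(ξ·x)|^p dx ≤ C ‖a_ξ‖_{ℓ²}^p for all complex a_ξ, for some p > 2. Let ν be any weak-* limit point of the empirical measures ν_R = |P_R|^{−1} ∑_{ξ∈P_R} δ_ξ. Then ν is a Borel probability measure on M satisfying the restriction-type estimate ‖(g dν)^∧‖_{L^p(ℝ^d)} ≤ C' ‖g‖_{L²(dν)} for all continuous g on M. -/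

import Mathlib

open MeasureTheory Complex Filter
open scoped ENNReal

noncomputable def e (z : ℝ) : ℂ := Complex.exp (2 * Real.pi * Complex.I * z)

def unitCube (d : ℕ) : Set (Fin d → ℝ) := Set.univ.pi fun _ => Set.Icc 0 1

/-!
The empirical transforms `x ↦ |P_R|⁻¹ ∑_{ξ ∈ P_R} g(ξ) e(-ξ·x)` converge pointwise to `(g dν)^`.
On any cube of side `R` (translating the cube only modulates the coefficients), decoupling
bounds their `p`-th power integral by `C R^d |P_R|^{-p/2} (|P_R|⁻¹ ∑ |g|²)^{p/2}`, and
`|P_R| ≥ c₀ R^{2d/p}` turns this into `C c₀^{-p/2} ‖g‖_{L²(ν_R)}^p`. Fatou's lemma, applied to the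
transforms cut off to centred cubes of side `R → ∞`, passes the bound to `(g dν)^`. Testing the
convergence against `1` and against `min (dist(·, M)) 1` shows that `ν` is a probability measure
carried by `M`.
-/

open Topology
open scoped ComplexConjugate

lemma e_add (s t : ℝ) : e (s + t) = e s * e t := by
  unfold e; rw [← Complex.exp_add]; push_cast; ring_nf

lemma conj_e (t : ℝ) : conj (e t) = e (-t) := by
  unfold e; rw [← Complex.exp_conj]; congr 1
  simp only [map_mul, Complex.conj_I, Complex.conj_ofReal, map_ofNat]
  push_cast; ring

lemma norm_e (t : ℝ) : ‖e t‖ = 1 := by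
  unfold e
  rw [Complex.norm_exp]
  norm_num [Complex.mul_re, Complex.mul_im]

@[fun_prop]
lemma continuous_e : Continuous e := by
  unfold e; fun_prop

noncomputable def empiricalMean {E 𝕜 : Type*} [DivisionRing 𝕜] (s : Finset E) (g : E → 𝕜) : 𝕜 :=
  (s.card : 𝕜)⁻¹ * ∑ ξ ∈ s, g ξ

lemma empiricalMean_const {E 𝕜 : Type*} [DivisionRing 𝕜] [CharZero 𝕜] {s : Finset E}
    (hs : s.Nonempty) (c : 𝕜) : empiricalMean s (fun _ => c) = c := by
  have : (s.card : 𝕜) ≠ 0 := by exact_mod_cast hs.card_pos.ne'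
  simp [empiricalMean, this]

lemma empiricalMean_ofReal {E : Type*} (s : Finset E) (g : E → ℝ) :
    empiricalMean s (fun ξ => (g ξ : ℂ)) = empiricalMean s g := by
  simp [empiricalMean]

lemma eLpNorm_le_ofReal_of_integral_norm_rpow_le {α F : Type*} [MeasurableSpace α]
    {μ : Measure α} [NormedAddCommGroup F] {f : α → F} {p A : ℝ} (hp : 0 < p) (hA : 0 ≤ A)
    (hf : MemLp f (ENNReal.ofReal p) μ) (h : ∫ x, ‖f x‖ ^ p ∂μ ≤ A ^ p) :
    eLpNorm f (ENNReal.ofReal p) μ ≤ ENNReal.ofReal A := by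
  rw [hf.eLpNorm_eq_integral_rpow_norm (by simpa using hp) ENNReal.ofReal_ne_top,
    ENNReal.toReal_ofReal hp.le]
  refine ENNReal.ofReal_le_ofReal ?_
  calc _ ≤ (A ^ p) ^ p⁻¹ := by gcongr
    _ = A := Real.rpow_rpow_inv hA hp.ne'

lemma eLpNorm_le_ofReal_of_tendsto {α F : Type*} [MeasurableSpace α] {μ : Measure α}
    [NormedAddCommGroup F] {p : ℝ≥0∞} {f : ℕ → α → F} {g : α → F} {a : ℕ → ℝ} {A : ℝ}
    (hf : ∀ n, AEStronglyMeasurable (f n) μ)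
    (hfg : ∀ᵐ x ∂μ, Tendsto (fun n => f n x) atTop (𝓝 (g x)))
    (hfa : ∀ n, eLpNorm (f n) p μ ≤ ENNReal.ofReal (a n)) (ha : Tendsto a atTop (𝓝 A)) :
    eLpNorm g p μ ≤ ENNReal.ofReal A :=
  calc eLpNorm g p μ ≤ atTop.liminf fun n => eLpNorm (f n) p μ :=
        Lp.eLpNorm_lim_le_liminf_eLpNorm hf g hfg
    _ ≤ atTop.liminf fun n => ENNReal.ofReal (a n) :=
        liminf_le_liminf (Eventually.of_forall hfa)
    _ = ENNReal.ofReal A := ((ENNReal.continuous_ofReal.tendsto A).comp ha).liminf_eq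

section EmpiricalLimit

variable {E : Type*} [TopologicalSpace E] [MeasurableSpace E]

def IsEmpiricalLimit (P : ℕ → Finset E) (ν : Measure E) : Prop :=
  ∀ g : E → ℂ, Continuous g →
    Tendsto (fun j => empiricalMean (P j) g) atTop (𝓝 (∫ ξ, g ξ ∂ν))

variable {P : ℕ → Finset E} {ν : Measure E}

lemma IsEmpiricalLimit.tendsto_real (hν : IsEmpiricalLimit P ν) {g : E → ℝ} (hg : Continuous g) :
    Tendsto (fun j => empiricalMean (P j) g) atTop (𝓝 (∫ ξ, g ξ ∂ν)) := by
  have := hν (fun ξ => (g ξ : ℂ)) (by fun_prop)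
  simp_rw [empiricalMean_ofReal, integral_complex_ofReal] at this
  exact tendsto_ofReal_iff.mp this

lemma IsEmpiricalLimit.isProbabilityMeasure (hν : IsEmpiricalLimit P ν)
    (hP : ∀ᶠ j in atTop, (P j).Nonempty) : IsProbabilityMeasure ν := by
  have hlim : Tendsto (fun j => empiricalMean (P j) (fun _ => (1 : ℝ))) atTop (𝓝 1) :=
    tendsto_const_nhds.congr' (hP.mono fun j hj => (empiricalMean_const hj 1).symm)
  have h := tendsto_nhds_unique (hν.tendsto_real continuous_const) hlim
  rw [integral_const, smul_eq_mul, mul_one, measureReal_def, ENNReal.toReal_eq_one_iff] at h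
  exact ⟨h⟩

end EmpiricalLimit

lemma IsEmpiricalLimit.measure_compl_eq_zero {E : Type*} [PseudoMetricSpace E]
    [MeasurableSpace E] [OpensMeasurableSpace E] {P : ℕ → Finset E} {ν : Measure E}
    [IsFiniteMeasure ν] (hν : IsEmpiricalLimit P ν) {M : Set E} (hM : IsClosed M)
    (hMne : M.Nonempty) (hPM : ∀ j, ∀ ξ ∈ P j, ξ ∈ M) : ν Mᶜ = 0 := by
  -- `min (infDist · M) 1` is a bounded continuous function whose zero set is exactly `M`.
  set g : E → ℝ := fun x => min (Metric.infDist x M) 1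
  have hg : Continuous g := by fun_prop
  have hg_nonneg : 0 ≤ g := fun x => le_min Metric.infDist_nonneg zero_le_one
  have hg_int : Integrable g ν := by
    refine (integrable_const (1 : ℝ)).mono' hg.aestronglyMeasurable (ae_of_all _ fun x => ?_)
    rw [Real.norm_of_nonneg (hg_nonneg x)]
    exact min_le_right _ _
  have hmean : ∀ j, empiricalMean (P j) g = 0 := fun j => by
    rw [empiricalMean, Finset.sum_eq_zero fun ξ hξ => by
      simp [g, Metric.infDist_zero_of_mem (hPM j ξ hξ)], mul_zero]
  have hzero : ∫ x, g x ∂ν = 0 :=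
    tendsto_nhds_unique (hν.tendsto_real hg) (by simp only [hmean, tendsto_const_nhds])
  have hae : ∀ᵐ x ∂ν, g x = 0 := (integral_eq_zero_iff_of_nonneg hg_nonneg hg_int).mp hzero
  refine measure_mono_null (fun x hx => ?_) (ae_iff.mp hae)
  have := (hM.notMem_iff_infDist_pos hMne).mp hx
  exact (lt_min this zero_lt_one).ne'

section Fourier

variable {d : ℕ}

def cube (d : ℕ) (R : ℝ) : Set (Fin d → ℝ) := Set.univ.pi fun _ => Set.Icc 0 R

def DecouplingIneq (s : Finset (Fin d → ℝ)) (R p C : ℝ) : Prop :=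
  ∀ a : (Fin d → ℝ) → ℂ,
    (1 / R ^ (d:ℝ)) * ∫ x in cube d R, ‖∑ ξ ∈ s, a ξ * e (∑ i, ξ i * x i)‖ ^ p
      ≤ C * Real.sqrt (∑ ξ ∈ s, ‖a ξ‖ ^ 2) ^ p

lemma isCompact_cube (d : ℕ) (R : ℝ) : IsCompact (cube d R) :=
  isCompact_univ_pi fun _ => isCompact_Icc

lemma mem_image_add_cube_of_norm_le {x : Fin d → ℝ} {R : ℝ} (hx : 2 * ‖x‖ ≤ R) :
    x ∈ ((fun _ => -(R / 2)) + ·) '' cube d R := by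
  refine ⟨fun i => x i + R / 2, fun i _ => ?_, by ext; simp⟩
  have := abs_le.mp ((Real.norm_eq_abs _).symm ▸ norm_le_pi_norm x i)
  constructor <;> linarith [this.1, this.2]

lemma continuous_empiricalMean_mul_e (s : Finset (Fin d → ℝ)) (g : (Fin d → ℝ) → ℂ) :
    Continuous fun x : Fin d → ℝ => empiricalMean s fun ξ => g ξ * e (-(∑ i, ξ i * x i)) := by
  unfold empiricalMean; fun_prop

lemma norm_sum_mul_e_neg_add (s : Finset (Fin d → ℝ)) (b : (Fin d → ℝ) → ℂ)
    (t u : Fin d → ℝ) :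
    ‖∑ ξ ∈ s, b ξ * e (-(∑ i, ξ i * (t + u) i))‖
      = ‖∑ ξ ∈ s, conj (b ξ * e (-(∑ i, ξ i * t i))) * e (∑ i, ξ i * u i)‖ := by
  rw [← RCLike.norm_conj, map_sum]
  congr 1
  refine Finset.sum_congr rfl fun ξ _ => ?_
  simp only [Pi.add_apply, mul_add, Finset.sum_add_distrib, neg_add, e_add, map_mul, conj_e,
    neg_neg]
  ring

lemma DecouplingIneq.setIntegral_image_add_le {s : Finset (Fin d → ℝ)} {R p C : ℝ}
    (h : DecouplingIneq s R p C) (hR : 0 < R) (b : (Fin d → ℝ) → ℂ) (t : Fin d → ℝ) :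
    ∫ x in (t + ·) '' cube d R, ‖∑ ξ ∈ s, b ξ * e (-(∑ i, ξ i * x i))‖ ^ p
      ≤ R ^ (d:ℝ) * (C * Real.sqrt (∑ ξ ∈ s, ‖b ξ‖ ^ 2) ^ p) := by
  rw [(measurePreserving_add_left volume t).setIntegral_image_emb
    (measurableEmbedding_addLeft t)]
  simp_rw [norm_sum_mul_e_neg_add]
  have := h fun ξ => conj (b ξ * e (-(∑ i, ξ i * t i)))
  simp only [RCLike.norm_conj, norm_mul, norm_e, mul_one] at this
  rwa [one_div, inv_mul_le_iff₀ (by positivity)] at this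

lemma DecouplingIneq.setIntegral_empiricalMean_le {s : Finset (Fin d → ℝ)} {R p C c₀ : ℝ}
    (h : DecouplingIneq s R p C) (hR : 0 < R) (hp : 0 < p) (hC : 0 ≤ C) (hc₀ : 0 < c₀)
    (hs : c₀ * R ^ (2 * (d:ℝ) / p) ≤ s.card) (g : (Fin d → ℝ) → ℂ) (t : Fin d → ℝ) :
    ∫ x in (t + ·) '' cube d R, ‖empiricalMean s fun ξ => g ξ * e (-(∑ i, ξ i * x i))‖ ^ p
      ≤ (C ^ (1 / p) / √c₀ * √(empiricalMean s fun ξ => ‖g ξ‖ ^ 2)) ^ p := by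
  set N : ℝ := (s.card : ℝ)
  set S : ℝ := empiricalMean s fun ξ => ‖g ξ‖ ^ 2
  have hRd : 0 < R ^ (2 * (d:ℝ) / p) := by positivity
  have hN : 0 < N := (mul_pos hc₀ hRd).trans_le hs
  have hS : 0 ≤ S := mul_nonneg (by positivity) (Finset.sum_nonneg fun _ _ => by positivity)
  have hsum : ∀ x : Fin d → ℝ, (empiricalMean s fun ξ => g ξ * e (-(∑ i, ξ i * x i)))
      = ∑ ξ ∈ s, ((N : ℂ)⁻¹ * g ξ) * e (-(∑ i, ξ i * x i)) := fun x => by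
    simp only [empiricalMean, Finset.mul_sum, mul_assoc, N, Complex.ofReal_natCast]
  have hnorm : ∑ ξ ∈ s, ‖(N : ℂ)⁻¹ * g ξ‖ ^ 2 = N⁻¹ * S := by
    rw [show S = N⁻¹ * ∑ ξ ∈ s, ‖g ξ‖ ^ 2 from rfl, Finset.mul_sum, Finset.mul_sum]
    refine Finset.sum_congr rfl fun ξ _ => ?_
    rw [norm_mul, norm_inv, Complex.norm_real, Real.norm_of_nonneg hN.le]
    ring
  -- `R ^ d = (R ^ (2d/p)) ^ (p/2)`, and `R ^ (2d/p) ≤ N / c₀` is the cardinality bound.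
  have hRN : R ^ (2 * (d:ℝ) / p) * N⁻¹ ≤ c₀⁻¹ := by
    rw [← div_eq_mul_inv, div_le_iff₀ hN, inv_mul_eq_div, le_div_iff₀ hc₀, mul_comm]
    exact hs
  simp_rw [hsum]
  calc _ ≤ R ^ (d:ℝ) * (C * √(N⁻¹ * S) ^ p) := by
        rw [← hnorm]; exact h.setIntegral_image_add_le hR _ t
    _ = C * (R ^ (2 * (d:ℝ) / p) * N⁻¹ * S) ^ (p / 2) := by
        rw [Real.sqrt_eq_rpow, ← Real.rpow_mul (by positivity), mul_assoc,
          Real.mul_rpow hRd.le (by positivity), ← Real.rpow_mul hR.le]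
        field_simp
    _ ≤ C * (c₀⁻¹ * S) ^ (p / 2) := by gcongr
    _ = (C ^ (1 / p) / √c₀ * √S) ^ p := by
        rw [inv_mul_eq_div, div_mul_eq_mul_div, mul_div_assoc, ← Real.sqrt_div' _ hc₀.le,
          Real.sqrt_eq_rpow, Real.mul_rpow (by positivity) (by positivity), ← Real.rpow_mul hC,
          ← Real.rpow_mul (by positivity), one_div_mul_cancel hp.ne', Real.rpow_one]
        ring_nf

lemma DecouplingIneq.eLpNorm_indicator_empiricalMean_le {s : Finset (Fin d → ℝ)}
    {R p C c₀ : ℝ} (h : DecouplingIneq s R p C) (hR : 0 < R) (hp : 0 < p) (hC : 0 ≤ C)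
    (hc₀ : 0 < c₀) (hs : c₀ * R ^ (2 * (d:ℝ) / p) ≤ s.card) (g : (Fin d → ℝ) → ℂ)
    (t : Fin d → ℝ) :
    eLpNorm (((t + ·) '' cube d R).indicator
        fun x => empiricalMean s fun ξ => g ξ * e (-(∑ i, ξ i * x i))) (ENNReal.ofReal p) volume
      ≤ ENNReal.ofReal (C ^ (1 / p) / √c₀ * √(empiricalMean s fun ξ => ‖g ξ‖ ^ 2)) := by
  have hQ : IsCompact ((t + ·) '' cube d R) := (isCompact_cube d R).image (continuous_const_add t)
  have hf := continuous_empiricalMean_mul_e s g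
  rw [eLpNorm_indicator_eq_eLpNorm_restrict hQ.measurableSet]
  refine eLpNorm_le_ofReal_of_integral_norm_rpow_le hp (by positivity) ?_
    (h.setIntegral_empiricalMean_le hR hp hC hc₀ hs g t)
  rw [← integrable_norm_rpow_iff hf.aestronglyMeasurable (by simpa using hp) ENNReal.ofReal_ne_top,
    ENNReal.toReal_ofReal hp.le]
  exact (hf.norm.rpow_const fun _ => Or.inr hp.le).continuousOn.integrableOn_compact hQ

end Fourier

theorem stmt9_general (d : ℕ) (p : ℝ) (hp : 2 < p)
    (M : Set (Fin d → ℝ)) (hMcpt : IsCompact M)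
    (R : ℕ → ℝ) (hR1 : ∀ j, 1 ≤ R j) (hR : Tendsto R atTop atTop)
    (P : ℕ → Finset (Fin d → ℝ))
    (c₀ C₀ C : ℝ) (hc₀ : 0 < c₀) (hC : 0 < C)
    (hPM : ∀ j, ∀ ξ ∈ P j, ξ ∈ M)
    (hcard : ∀ j, c₀ * R j ^ (2*(d:ℝ)/p) ≤ ((P j).card : ℝ) ∧
                  ((P j).card : ℝ) ≤ C₀ * R j ^ (2*(d:ℝ)/p))
    (hdec : ∀ j, ∀ a : (Fin d → ℝ) → ℂ,
      (1 / R j ^ (d:ℝ)) *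
          ∫ x in Set.univ.pi fun _ : Fin d => Set.Icc (0:ℝ) (R j),
            ‖∑ ξ ∈ P j, a ξ * e (∑ i, ξ i * x i)‖ ^ p
        ≤ C * Real.sqrt (∑ ξ ∈ P j, ‖a ξ‖ ^ 2) ^ p)
    (ν : Measure (Fin d → ℝ)) [IsFiniteMeasure ν]
    (hweak : ∀ g : (Fin d → ℝ) → ℂ, Continuous g →
      Tendsto (fun j => (((P j).card : ℂ))⁻¹ * ∑ ξ ∈ P j, g ξ) atTop
        (nhds (∫ ξ, g ξ ∂ν))) :
    IsProbabilityMeasure ν ∧ ν Mᶜ = 0 ∧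
      ∃ C' > (0:ℝ), ∀ g : (Fin d → ℝ) → ℂ, Continuous g →
        eLpNorm (fun x : Fin d → ℝ => ∫ ξ, g ξ * e (-(∑ i, ξ i * x i)) ∂ν)
            (ENNReal.ofReal p) volume
          ≤ ENNReal.ofReal (C' * Real.sqrt (∫ ξ, ‖g ξ‖ ^ 2 ∂ν)) := by
  have hp0 : 0 < p := by linarith
  have hR0 : ∀ j, 0 < R j := fun j => one_pos.trans_le (hR1 j)
  have hP : ∀ j, (P j).Nonempty := fun j => by
    rw [← Finset.card_pos, ← Nat.cast_pos (α := ℝ)]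
    exact (mul_pos hc₀ (Real.rpow_pos_of_pos (hR0 j) _)).trans_le (hcard j).1
  have hν : IsEmpiricalLimit P ν := hweak
  have hdecR : ∀ j, DecouplingIneq (P j) (R j) p C := hdec
  obtain ⟨ξ₀, hξ₀⟩ := hP 0
  refine ⟨hν.isProbabilityMeasure (Eventually.of_forall hP),
    hν.measure_compl_eq_zero hMcpt.isClosed ⟨ξ₀, hPM 0 ξ₀ hξ₀⟩ hPM,
    C ^ (1 / p) / √c₀, div_pos (Real.rpow_pos_of_pos hC _) (Real.sqrt_pos.mpr hc₀), fun g hg => ?_⟩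
  -- `Q j` is the cube of side `R j` centred at the origin.
  set Q : ℕ → Set (Fin d → ℝ) := fun j => ((fun _ => -(R j / 2)) + ·) '' cube d (R j)
  refine eLpNorm_le_ofReal_of_tendsto
    (f := fun j => (Q j).indicator
      fun x => empiricalMean (P j) fun ξ => g ξ * e (-(∑ i, ξ i * x i)))
    (fun j => ?_) (ae_of_all _ fun x => ?_)
    (fun j => (hdecR j).eLpNorm_indicator_empiricalMean_le (hR0 j) hp0 hC.le hc₀ (hcard j).1 g _)
    ((hν.tendsto_real (by fun_prop)).sqrt.const_mul _)
  · exact (continuous_empiricalMean_mul_e _ g).aestronglyMeasurable.indicator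
      ((isCompact_cube d (R j)).image (continuous_const_add _)).measurableSet
  · refine Tendsto.congr' ?_ (hν _ (by fun_prop))
    filter_upwards [hR.eventually_ge_atTop (2 * ‖x‖)] with j hj
    rw [Set.indicator_of_mem (mem_image_add_cube_of_norm_le hj)]

theorem stmt9 (d : ℕ) (hd : 0 < d) (p : ℝ) (hp : 2 < p)
    (M : Set (Fin d → ℝ)) (hMcpt : IsCompact M) (hMcube : M ⊆ unitCube d)
    (R : ℕ → ℝ) (hR1 : ∀ j, 1 ≤ R j) (hR : Tendsto R atTop atTop)
    (P : ℕ → Finset (Fin d → ℝ))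
    (c₀ C₀ C : ℝ) (hc₀ : 0 < c₀) (hC₀ : 0 < C₀) (hC : 0 < C)
    (hPM : ∀ j, ∀ ξ ∈ P j, ξ ∈ M)
    (hcard : ∀ j, c₀ * R j ^ (2*(d:ℝ)/p) ≤ ((P j).card : ℝ) ∧
                  ((P j).card : ℝ) ≤ C₀ * R j ^ (2*(d:ℝ)/p))
    (hdec : ∀ j, ∀ a : (Fin d → ℝ) → ℂ,
      (1 / R j ^ (d:ℝ)) *
          ∫ x in Set.univ.pi fun _ : Fin d => Set.Icc (0:ℝ) (R j),
            ‖∑ ξ ∈ P j, a ξ * e (∑ i, ξ i * x i)‖ ^ p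
        ≤ C * Real.sqrt (∑ ξ ∈ P j, ‖a ξ‖ ^ 2) ^ p)
    (ν : Measure (Fin d → ℝ)) [IsFiniteMeasure ν]
    (hweak : ∀ g : (Fin d → ℝ) → ℂ, Continuous g →
      Tendsto (fun j => (((P j).card : ℂ))⁻¹ * ∑ ξ ∈ P j, g ξ) atTop
        (nhds (∫ ξ, g ξ ∂ν))) :
    IsProbabilityMeasure ν ∧ ν Mᶜ = 0 ∧
      ∃ C' > (0:ℝ), ∀ g : (Fin d → ℝ) → ℂ, Continuous g →
        eLpNorm (fun x : Fin d → ℝ => ∫ ξ, g ξ * e (-(∑ i, ξ i * x i)) ∂ν)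
            (ENNReal.ofReal p) volume
          ≤ ENNReal.ofReal (C' * Real.sqrt (∫ ξ, ‖g ξ‖ ^ 2 ∂ν)) :=
  stmt9_general d p hp M hMcpt R hR1 hR P c₀ C₀ C hc₀ hC hPM hcard hdec ν hweak
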